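/- arXiv:2403.05734 — 2 statements merged into one kernel-verified Lean document; each statement's English description precedes it below -/
import Mathlib

section
/- Let p, q ∈ ℝ², r ≥ 0, and let g⁺, g⁻ be the guide complements of p and q. Then L(p,q;r) = [L(p,g⁺;r) ∪ L(q,g⁺;r)] ∩ [L(p,g⁻;r) ∪ L(q,g⁻;r)], where L(a,b;r) = {x : d(x,a)·d(x,b) < r²} with d the taxicab distance. -/
noncomputable def taxi (a b : ℝ × ℝ) : ℝ := |a.1 - b.1| + |a.2 - b.2|

noncomputable def gplus (p q : ℝ × ℝ) : ℝ × ℝ :=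
  ((p.1 - p.2 + q.1 + q.2) / 2, (q.1 + q.2 - p.1 + p.2) / 2)

noncomputable def gminus (p q : ℝ × ℝ) : ℝ × ℝ :=
  ((p.1 + p.2 + q.1 - q.2) / 2, (p.1 + p.2 - q.1 + q.2) / 2)

def Lset (a b : ℝ × ℝ) (r : ℝ) : Set (ℝ × ℝ) := {x | taxi x a * taxi x b < r ^ 2}

def Kset (a b : ℝ × ℝ) (r : ℝ) : Set (ℝ × ℝ) := {x | taxi x a * taxi x b = r ^ 2}

lemma tmax (a b : ℝ) : |a| + |b| = max |a + b| |a - b| := by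
  have hub : max |a + b| |a - b| ≤ |a| + |b| := max_le (abs_add_le a b) (abs_sub a b)
  refine le_antisymm ?_ hub
  rcases le_total 0 a with ha | ha <;> rcases le_total 0 b with hb | hb
  · calc |a| + |b| = a + b := by rw [abs_of_nonneg ha, abs_of_nonneg hb]
      _ ≤ |a + b| := le_abs_self _
      _ ≤ _ := le_max_left _ _
  · calc |a| + |b| = a - b := by rw [abs_of_nonneg ha, abs_of_nonpos hb]; ring
      _ ≤ |a - b| := le_abs_self _
      _ ≤ _ := le_max_right _ _
  · calc |a| + |b| = -(a - b) := by rw [abs_of_nonpos ha, abs_of_nonneg hb]; ring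
      _ ≤ |a - b| := neg_le_abs _
      _ ≤ _ := le_max_right _ _
  · calc |a| + |b| = -(a + b) := by rw [abs_of_nonpos ha, abs_of_nonpos hb]; ring
      _ ≤ |a + b| := neg_le_abs _
      _ ≤ _ := le_max_left _ _

lemma taxi_eq_max (a b : ℝ × ℝ) :
    taxi a b = max |(a.1 + a.2) - (b.1 + b.2)| |(a.1 - a.2) - (b.1 - b.2)| := by
  unfold taxi
  rw [tmax (a.1 - b.1) (a.2 - b.2)]
  congr 1 <;> congr 1 <;> ring

lemma key (A B C D R : ℝ) (hA : 0 ≤ A) (hB : 0 ≤ B) (hC : 0 ≤ C) (hD : 0 ≤ D) :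
    max A B * max C D < R ↔
      (max A B * max C B < R ∨ max C D * max C B < R) ∧
      (max A B * max A D < R ∨ max C D * max A D < R) := by
  have hAB : 0 ≤ max A B := le_max_of_le_left hA
  have hCD : 0 ≤ max C D := le_max_of_le_left hC
  have H : ∀ {x y a b : ℝ}, 0 ≤ x → 0 ≤ y → x ≤ a → y ≤ b → a * b < R → x * y < R := by
    intro x y a b hx hy hxa hyb hab
    exact lt_of_le_of_lt (mul_le_mul hxa hyb hy (hx.trans hxa)) hab
  constructor
  · intro h
    constructor
    · rcases le_total B C with hbc | hbc
      · left
        rw [max_eq_left hbc]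
        exact lt_of_le_of_lt (mul_le_mul_of_nonneg_left (le_max_left C D) hAB) h
      · right
        rw [max_eq_right hbc]
        calc max C D * B ≤ max C D * max A B :=
              mul_le_mul_of_nonneg_left (le_max_right A B) hCD
          _ = max A B * max C D := mul_comm _ _
          _ < R := h
    · rcases le_total A D with had | had
      · left
        rw [max_eq_right had]
        exact lt_of_le_of_lt (mul_le_mul_of_nonneg_left (le_max_right C D) hAB) h
      · right
        rw [max_eq_left had]
        calc max C D * A ≤ max C D * max A B :=
              mul_le_mul_of_nonneg_left (le_max_left A B) hCD
          _ = max A B * max C D := mul_comm _ _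
          _ < R := h
  · rintro ⟨h1, h2⟩
    have key4 : A * C < R → A * D < R → B * C < R → B * D < R →
        max A B * max C D < R := by
      intro k1 k2 k3 k4
      rcases max_cases A B with ⟨e1, _⟩ | ⟨e1, _⟩ <;>
        rcases max_cases C D with ⟨e2, _⟩ | ⟨e2, _⟩ <;> rw [e1, e2] <;> assumption
    rcases h1 with h1 | h1 <;> rcases h2 with h2 | h2
    · -- h1 : max A B * max C B < R, h2 : max A B * max A D < R
      exact key4 (H hA hC (le_max_left A B) (le_max_left C B) h1)
        (H hA hD (le_max_left A B) (le_max_right A D) h2)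
        (H hB hC (le_max_right A B) (le_max_left C B) h1)
        (H hB hD (le_max_right A B) (le_max_right A D) h2)
    · -- h1 : max A B * max C B < R, h2 : max C D * max A D < R
      refine key4 (H hA hC (le_max_left A B) (le_max_left C B) h1)
        ?_ (H hB hC (le_max_right A B) (le_max_left C B) h1) ?_
      · have := H hD hA (le_max_right C D) (le_max_left A D) h2
        rwa [mul_comm]
      · rcases le_total B D with hbd | hbd
        · exact H hB hD (hbd.trans (le_max_right C D)) (le_max_right A D) h2
        · exact H hB hD (le_max_right A B) (hbd.trans (le_max_right C B)) h1
    · -- h1 : max C D * max C B < R, h2 : max A B * max A D < R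
      refine key4 ?_ (H hA hD (le_max_left A B) (le_max_right A D) h2) ?_ ?_
      · rcases le_total A C with hac | hac
        · exact H hA hC (hac.trans (le_max_left C D)) (le_max_left C B) h1
        · exact H hA hC (le_max_left A B) (hac.trans (le_max_left A D)) h2
      · have := H hC hB (le_max_left C D) (le_max_right C B) h1
        rwa [mul_comm]
      · exact H hB hD (le_max_right A B) (le_max_right A D) h2
    · -- h1 : max C D * max C B < R, h2 : max C D * max A D < R
      refine key4 ?_ ?_ ?_ ?_
      · have := H hC hA (le_max_left C D) (le_max_left A D) h2
        rwa [mul_comm]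
      · have := H hD hA (le_max_right C D) (le_max_left A D) h2
        rwa [mul_comm]
      · have := H hC hB (le_max_left C D) (le_max_right C B) h1
        rwa [mul_comm]
      · have := H hD hB (le_max_right C D) (le_max_right C B) h1
        rwa [mul_comm]

theorem intersection_of_unions (p q : ℝ × ℝ) (r : ℝ) (hr : 0 ≤ r) :
    Lset p q r =
      (Lset p (gplus p q) r ∪ Lset q (gplus p q) r) ∩
      (Lset p (gminus p q) r ∪ Lset q (gminus p q) r) := by
  ext x
  simp only [Lset, Set.mem_setOf_eq, Set.mem_inter_iff, Set.mem_union]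
  set A := |(x.1 + x.2) - (p.1 + p.2)| with hA
  set B := |(x.1 - x.2) - (p.1 - p.2)| with hB
  set C := |(x.1 + x.2) - (q.1 + q.2)| with hC
  set D := |(x.1 - x.2) - (q.1 - q.2)| with hD
  have e1 : taxi x p = max A B := taxi_eq_max x p
  have e2 : taxi x q = max C D := taxi_eq_max x q
  have e3 : taxi x (gplus p q) = max C B := by
    rw [taxi_eq_max, hC, hB]
    unfold gplus
    congr 1 <;> congr 1 <;> ring
  have e4 : taxi x (gminus p q) = max A D := by
    rw [taxi_eq_max, hA, hD]
    unfold gminus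
    congr 1 <;> congr 1 <;> ring
  rw [e1, e2, e3, e4]
  exact key A B C D (r ^ 2) (abs_nonneg _) (abs_nonneg _) (abs_nonneg _) (abs_nonneg _)
end

section
/- Let p, q ∈ ℝ², r ≥ 0, with guide complements g⁺, g⁻. Then L(p,q;r) ⊆ [L(p,g⁺;r) ∪ L(q,g⁻;r)] ∩ [L(p,g⁻;r) ∪ L(q,g⁺;r)]. -/
lemma abs_add_abs_eq_max (x y : ℝ) : |x| + |y| = max |x + y| |x - y| := by
  rcases abs_cases x with ⟨hx, hx'⟩ | ⟨hx, hx'⟩ <;>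
  rcases abs_cases y with ⟨hy, hy'⟩ | ⟨hy, hy'⟩ <;>
  rcases abs_cases (x + y) with ⟨h1, h1'⟩ | ⟨h1, h1'⟩ <;>
  rcases abs_cases (x - y) with ⟨h2, h2'⟩ | ⟨h2, h2'⟩ <;>
  rw [max_def] <;> split_ifs <;> linarith

lemma taxi_cheb (a b : ℝ × ℝ) :
    taxi a b = max |a.1 + a.2 - (b.1 + b.2)| |a.1 - a.2 - (b.1 - b.2)| := by
  rw [show a.1 + a.2 - (b.1 + b.2) = (a.1 - b.1) + (a.2 - b.2) by ring,
    show a.1 - a.2 - (b.1 - b.2) = (a.1 - b.1) - (a.2 - b.2) by ring,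
    ← abs_add_abs_eq_max]
  rfl

theorem L_subset_mixed (p q : ℝ × ℝ) (r : ℝ) (hr : 0 ≤ r) :
    Lset p q r ⊆
      (Lset p (gplus p q) r ∪ Lset q (gminus p q) r) ∩
      (Lset p (gminus p q) r ∪ Lset q (gplus p q) r) := by
  intro x hx
  simp only [Lset, Set.mem_setOf_eq] at hx
  set Ap := |x.1 + x.2 - (p.1 + p.2)| with hAp
  set Bp := |x.1 - x.2 - (p.1 - p.2)| with hBp
  set Aq := |x.1 + x.2 - (q.1 + q.2)| with hAq
  set Bq := |x.1 - x.2 - (q.1 - q.2)| with hBq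
  have hp : taxi x p = max Ap Bp := taxi_cheb x p
  have hq : taxi x q = max Aq Bq := taxi_cheb x q
  have hgp : taxi x (gplus p q) = max Aq Bp := by
    rw [taxi_cheb]
    congr 2 <;> simp [gplus] <;> ring
  have hgm : taxi x (gminus p q) = max Ap Bq := by
    rw [taxi_cheb]
    congr 2 <;> simp [gminus] <;> ring
  have hp0 : 0 ≤ taxi x p := by rw [hp]; positivity
  have hq0 : 0 ≤ taxi x q := by rw [hq]; positivity
  constructor
  · rcases le_total Bp Bq with h | h
    · left
      show taxi x p * taxi x (gplus p q) < r ^ 2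
      have : taxi x (gplus p q) ≤ taxi x q := by
        rw [hgp, hq]; exact max_le_max le_rfl h
      calc taxi x p * taxi x (gplus p q) ≤ taxi x p * taxi x q :=
            mul_le_mul_of_nonneg_left this hp0
        _ < r ^ 2 := hx
    · right
      show taxi x q * taxi x (gminus p q) < r ^ 2
      have : taxi x (gminus p q) ≤ taxi x p := by
        rw [hgm, hp]; exact max_le_max le_rfl h
      calc taxi x q * taxi x (gminus p q) ≤ taxi x q * taxi x p :=
            mul_le_mul_of_nonneg_left this hq0
        _ < r ^ 2 := by rw [mul_comm]; exact hx
  · rcases le_total Ap Aq with h | h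
    · left
      show taxi x p * taxi x (gminus p q) < r ^ 2
      have : taxi x (gminus p q) ≤ taxi x q := by
        rw [hgm, hq]; exact max_le_max h le_rfl
      calc taxi x p * taxi x (gminus p q) ≤ taxi x p * taxi x q :=
            mul_le_mul_of_nonneg_left this hp0
        _ < r ^ 2 := hx
    · right
      show taxi x q * taxi x (gplus p q) < r ^ 2
      have : taxi x (gplus p q) ≤ taxi x p := by
        rw [hgp, hp]; exact max_le_max h le_rfl
      calc taxi x q * taxi x (gplus p q) ≤ taxi x q * taxi x p :=
            mul_le_mul_of_nonneg_left this hq0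
        _ < r ^ 2 := by rw [mul_comm]; exact hx
end
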